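/- arXiv:1802.04963 — 2 statements merged into one kernel-verified Lean document; each statement's English description precedes it below -/
import Mathlib

section
/- Let T be a triangle with edges e_k of length ℓ_k and unit tangents t_k (counterclockwise), and let w be a quadratic polynomial on ℝ². If I_h w denotes the affine (linear) interpolant of w at the three vertices of T, then w − I_h w = −(1/2) ∑_{k=1}^{3} ℓ_k² φ_k ∂_{t_k}² w, where φ_k = λ_{k−1} λ_{k+1} and ∂_{t_k}² w is the (constant) second tangential derivative of w along e_k. -/
/-!
In barycentric coordinates `x = ∑ μᵢ zᵢ` (`∑ μᵢ = 1`) the interpolant reproduces the affine part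
`c + b` of `w`, so `w x - I_h w x = B x x - ∑ μᵢ B zᵢ zᵢ`. Expanding the quadratic form shows
`∑ᵢ ∑ⱼ μᵢ μⱼ B (zᵢ - zⱼ) (zᵢ - zⱼ) = 2 (∑ μᵢ B zᵢ zᵢ - B x x)`; for three points the unordered pairs
`{i, j}` are the edges `{k - 1, k + 1}`, and `ℓ_k² B t_k t_k = B e_k e_k` for the edge vector `e_k`.
-/

open Finset

theorem AffineBasis.coord_eq_of_apply_eq_ite {ι k V P : Type*} [Ring k] [AddCommGroup V]
    [Module k V] [AddTorsor V P] [DecidableEq ι] (b : AffineBasis ι k P) {f : P →ᵃ[k] k} {i : ι}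
    (hf : ∀ j, f (b j) = if i = j then 1 else 0) : f = b.coord i :=
  AffineMap.ext_on b.tot <| by rintro _ ⟨j, rfl⟩; simp [hf, b.coord_apply]

theorem AffineMap.apply_eq_sum_coord_smul {ι k V P W : Type*} [Fintype ι] [Ring k]
    [AddCommGroup V] [Module k V] [AddTorsor V P] [AddCommGroup W] [Module k W]
    (b : AffineBasis ι k P) (f : P →ᵃ[k] W) (q : P) :
    f q = ∑ i, b.coord i q • f (b i) := by
  have hsum := b.sum_coord_apply_eq_one q
  conv_lhs => rw [← b.affineCombination_coord_eq_self q]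
  rw [univ.map_affineCombination _ _ hsum, univ.affineCombination_eq_linear_combination _ _ hsum]
  rfl

section Quadratic

variable {ι R V : Type*} [CommRing R] [AddCommGroup V] [Module R V]

theorem LinearMap.apply_sum_smul_sum_smul (B : V →ₗ[R] V →ₗ[R] R) (s : Finset ι) (μ : ι → R)
    (p : ι → V) :
    B (∑ i ∈ s, μ i • p i) (∑ j ∈ s, μ j • p j) = ∑ i ∈ s, ∑ j ∈ s, μ i * μ j * B (p i) (p j) := by
  simp only [map_sum, map_smul, LinearMap.coe_sum, LinearMap.coe_smul, Finset.sum_apply,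
    Pi.smul_apply, smul_eq_mul, mul_sum, mul_assoc]
  exact sum_comm.trans (sum_congr rfl fun i _ => sum_congr rfl fun j _ => mul_left_comm _ _ _)

theorem LinearMap.sum_sum_mul_apply_sub_sub (B : V →ₗ[R] V →ₗ[R] R) (s : Finset ι) {μ : ι → R}
    (hμ : ∑ i ∈ s, μ i = 1) (p : ι → V) :
    ∑ i ∈ s, ∑ j ∈ s, μ i * μ j * B (p i - p j) (p i - p j) =
      2 * (∑ i ∈ s, μ i * B (p i) (p i) - B (∑ i ∈ s, μ i • p i) (∑ i ∈ s, μ i • p i)) := by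
  have hleft : ∑ i ∈ s, ∑ j ∈ s, μ i * μ j * B (p i) (p i) = ∑ i ∈ s, μ i * B (p i) (p i) :=
    sum_congr rfl fun i _ => by rw [← sum_mul, ← mul_sum, hμ, mul_one]
  have hright : ∑ i ∈ s, ∑ j ∈ s, μ i * μ j * B (p j) (p j) = ∑ i ∈ s, μ i * B (p i) (p i) := by
    rw [sum_comm, ← hleft]
    simp_rw [mul_comm (μ _) (μ _)]
  have hcross : ∑ i ∈ s, ∑ j ∈ s, μ i * μ j * B (p j) (p i) =
      ∑ i ∈ s, ∑ j ∈ s, μ i * μ j * B (p i) (p j) := by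
    rw [sum_comm]
    simp_rw [mul_comm (μ _) (μ _)]
  simp only [map_sub, LinearMap.sub_apply, mul_sub, sum_sub_distrib, hleft, hright, hcross,
    B.apply_sum_smul_sum_smul]
  ring

theorem sum_mul_quadratic_of_sum_eq_one (c : R) (b : V →ₗ[R] R) (B : V →ₗ[R] V →ₗ[R] R)
    (s : Finset ι) {μ : ι → R} (hμ : ∑ i ∈ s, μ i = 1) (p : ι → V) :
    ∑ i ∈ s, μ i * (c + b (p i) + B (p i) (p i)) =
      c + b (∑ i ∈ s, μ i • p i) + ∑ i ∈ s, μ i * B (p i) (p i) := by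
  simp only [mul_add, sum_add_distrib, ← sum_mul, hμ, one_mul, map_sum, map_smul, smul_eq_mul]

end Quadratic

theorem Fin.sum_sum_three_of_symm {M : Type*} [AddCommMonoid M] (g : Fin 3 → Fin 3 → M)
    (hsymm : ∀ i j, g i j = g j i) (hdiag : ∀ i, g i i = 0) :
    ∑ i, ∑ j, g i j = 2 • ∑ k, g (k - 1) (k + 1) := by
  simp only [sum_univ_three, Fin.isValue, hdiag, Fin.reduceAdd, Fin.reduceSub, zero_add, add_zero]
  rw [hsymm 0 1, hsymm 1 2, hsymm 2 0, two_nsmul]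
  abel

theorem sq_norm_mul_apply_inv_norm_smul {V : Type*} [NormedAddCommGroup V] [NormedSpace ℝ V]
    (B : V →ₗ[ℝ] V →ₗ[ℝ] ℝ) (v : V) :
    ‖v‖ ^ 2 * B (‖v‖⁻¹ • v) (‖v‖⁻¹ • v) = B v v := by
  rcases eq_or_ne v 0 with rfl | hv
  · simp
  · have : ‖v‖ ≠ 0 := norm_ne_zero_iff.mpr hv
    simp only [map_smul, LinearMap.smul_apply, smul_eq_mul]
    field_simp

/-- Hierarchical error representation of the linear interpolant of a quadratic polynomial:
`w − I_h w = −(1/2) ∑_k ℓ_k² φ_k ∂_{t_k}² w`, where `φ_k = λ_{k−1} λ_{k+1}` and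
`∂_{t_k}² w = 2 B t_k t_k` for `w x = c + b x + B x x`. -/
theorem quadratic_minus_linear_interpolant
    (z : Fin 3 → EuclideanSpace ℝ (Fin 2)) (hz : AffineIndependent ℝ z)
    (lam : Fin 3 → (EuclideanSpace ℝ (Fin 2) →ᵃ[ℝ] ℝ))
    (hlam : ∀ i j, lam i (z j) = if i = j then 1 else 0)
    (ℓ : Fin 3 → ℝ) (hℓ : ∀ j, ℓ j = dist (z (j + 1)) (z (j - 1)))
    (t : Fin 3 → EuclideanSpace ℝ (Fin 2))
    (ht : ∀ j, t j = ‖z (j - 1) - z (j + 1)‖⁻¹ • (z (j - 1) - z (j + 1)))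
    (c : ℝ) (b : EuclideanSpace ℝ (Fin 2) →ₗ[ℝ] ℝ)
    (B : EuclideanSpace ℝ (Fin 2) →ₗ[ℝ] EuclideanSpace ℝ (Fin 2) →ₗ[ℝ] ℝ)
    (w : EuclideanSpace ℝ (Fin 2) → ℝ) (hw : ∀ x, w x = c + b x + B x x)
    (Ihw : EuclideanSpace ℝ (Fin 2) →ᵃ[ℝ] ℝ)
    (hI : ∀ i, Ihw (z i) = w (z i))
    (x : EuclideanSpace ℝ (Fin 2)) :
    w x - Ihw x =
      -(1 / 2) * ∑ k : Fin 3,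
        (ℓ k) ^ 2 * (lam (k - 1) x * lam (k + 1) x) * (2 * B (t k) (t k)) := by
  let bs : AffineBasis (Fin 3) ℝ (EuclideanSpace ℝ (Fin 2)) :=
    ⟨z, hz, hz.affineSpan_eq_top_iff_card_eq_finrank_add_one.mpr (by simp)⟩
  set μ : Fin 3 → ℝ := fun i => bs.coord i x
  have hμ : ∑ i, μ i = 1 := bs.sum_coord_apply_eq_one x
  have hx : ∑ i, μ i • z i = x := bs.linear_combination_coord_eq_self x
  have hlamx : ∀ i, lam i x = μ i := fun i => by rw [bs.coord_eq_of_apply_eq_ite (hlam i)]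
  have hIx : Ihw x = ∑ i, μ i * w (z i) := by
    simp only [← hI, ← smul_eq_mul]
    exact Ihw.apply_eq_sum_coord_smul bs x
  have hedge : ∀ k, ℓ k ^ 2 * B (t k) (t k) = B (z (k - 1) - z (k + 1)) (z (k - 1) - z (k + 1)) :=
    fun k => by rw [ht, hℓ, dist_comm, dist_eq_norm, sq_norm_mul_apply_inv_norm_smul]
  have hsymm : ∀ i j, μ i * μ j * B (z i - z j) (z i - z j) =
      μ j * μ i * B (z j - z i) (z j - z i) := fun i j => by
    rw [← neg_sub (z j) (z i)]
    simp only [map_neg, LinearMap.neg_apply, neg_neg, mul_comm (μ i)]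
  calc w x - Ihw x = -(1 / 2) * (2 * (∑ i, μ i * B (z i) (z i) - B x x)) := by
        rw [hIx]
        simp only [hw, sum_mul_quadratic_of_sum_eq_one c b B _ hμ, hx]
        ring
    _ = -(1 / 2) * ∑ i, ∑ j, μ i * μ j * B (z i - z j) (z i - z j) := by
        rw [B.sum_sum_mul_apply_sub_sub _ hμ, hx]
    _ = -(1 / 2) * (2 • ∑ k, μ (k - 1) * μ (k + 1) *
          B (z (k - 1) - z (k + 1)) (z (k - 1) - z (k + 1))) := by
        rw [Fin.sum_sum_three_of_symm _ hsymm (by simp)]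
    _ = _ := by
        simp only [hlamx, ← hedge, nsmul_eq_mul, mul_sum]
        exact sum_congr rfl fun k _ => by ring
end

section
/- Let T be a nondegenerate triangle with area |T|, edges e_k of length ℓ_k, angles θ_k opposite e_k, and unit tangents t_k. For any quadratic polynomial w on ℝ², Δw = (1/(4|T|²)) ∑_{k=1}^{3} ℓ_k² ℓ_{k−1} ℓ_{k+1} cos θ_k · ∂_{t_k}² w. -/
/-!
Writing `w x = c + b x + B x x`, one has `Δw = 2 (B e₀ e₀ + B e₁ e₁)` and
`∂²_{t_k} w = 2 B t_k t_k`. At the vertex `z_k`,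
`ℓ_{k-1} ℓ_{k+1} cos θ_k = ⟪z_{k+1} - z_k, z_{k-1} - z_k⟫`, and `ℓ_k² B t_k t_k = B d_k d_k` for
the edge vector `d_k = z_{k-1} - z_{k+1}`. With `D = det (z₁ - z₀, z₂ - z₀)` we have
`4 |T|² = D²`, so the claim becomes the polynomial identity
`D² (B e₀ e₀ + B e₁ e₁) = ∑_k ⟪z_{k+1} - z_k, z_{k-1} - z_k⟫ B d_k d_k`, i.e. the identity matrix
times `D²` equals `∑_k ⟪z_{k+1} - z_k, z_{k-1} - z_k⟫ d_k d_kᵀ`.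
-/

open EuclideanGeometry MeasureTheory Pointwise

def det2 (u v : EuclideanSpace ℝ (Fin 2)) : ℝ := u 0 * v 1 - u 1 * v 0

theorem det2_sub_ne_zero_of_affineIndependent {z : Fin 3 → EuclideanSpace ℝ (Fin 2)}
    (hz : AffineIndependent ℝ z) : det2 (z 1 - z 0) (z 2 - z 0) ≠ 0 := by
  set u := z 1 - z 0
  set v := z 2 - z 0
  have eq_zero_of_smul_eq : ∀ a b : ℝ, a • u = b • v → a = 0 ∧ b = 0 := by
    intro a b hab
    have hw := hz.eq_zero_of_sum_eq_zero (s := Finset.univ) (w := ![b - a, a, -b])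
      (by simp [Fin.sum_univ_three])
      (by
        simp only [Fin.sum_univ_three, Fin.isValue, Matrix.cons_val_zero, Matrix.cons_val_one,
          Matrix.cons_val, neg_smul]
        linear_combination (norm := module) hab)
    exact ⟨by simpa using hw 1 (by simp), by simpa using hw 2 (by simp)⟩
  intro hD
  unfold det2 at hD
  -- `D = 0` makes `v₁ • u = u₁ • v` and `v₀ • u = u₀ • v`
  obtain ⟨-, hu1⟩ := eq_zero_of_smul_eq (v 1) (u 1) (by ext i; fin_cases i <;> simp <;> linarith)
  obtain ⟨-, hu0⟩ := eq_zero_of_smul_eq (v 0) (u 0) (by ext i; fin_cases i <;> simp <;> linarith)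
  have hu_zero : u = 0 := by ext i; fin_cases i <;> simp [hu0, hu1]
  exact hz.injective.ne (by decide : (1 : Fin 3) ≠ 0) (sub_eq_zero.mp hu_zero)

theorem volume_triangle_prod :
    volume {x : ℝ × ℝ | 0 ≤ x.1 ∧ 0 ≤ x.2 ∧ x.1 + x.2 ≤ 1} = ENNReal.ofReal (1 / 2) := by
  set S := {x : ℝ × ℝ | 0 ≤ x.1 ∧ 0 ≤ x.2 ∧ x.1 + x.2 ≤ 1}
  have hmeas : MeasurableSet S := by measurability
  have hslice : ∀ x : ℝ, volume (Prod.mk x ⁻¹' S) =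
      (Set.Icc 0 1).indicator (fun x ↦ ENNReal.ofReal (1 - x)) x := by
    intro x
    by_cases hx : x ∈ Set.Icc (0 : ℝ) 1
    · have : Prod.mk x ⁻¹' S = Set.Icc 0 (1 - x) := by
        ext y
        simp only [Set.mem_preimage, Set.mem_Icc]
        constructor
        · rintro ⟨-, hy, hxy⟩; exact ⟨hy, by linarith⟩
        · rintro ⟨hy, hxy⟩; exact ⟨hx.1, hy, by linarith⟩
      rw [this, Real.volume_Icc, Set.indicator_of_mem hx, sub_zero]
    · have : Prod.mk x ⁻¹' S = ∅ := by
        ext y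
        simp only [Set.mem_preimage, Set.mem_empty_iff_false, iff_false]
        rintro ⟨h0, hy, hxy⟩
        exact hx ⟨h0, by linarith⟩
      rw [this, measure_empty, Set.indicator_of_notMem hx]
  rw [Measure.volume_eq_prod, Measure.prod_apply hmeas]
  simp_rw [hslice]
  rw [lintegral_indicator measurableSet_Icc, ← ofReal_integral_eq_lintegral_ofReal,
    integral_Icc_eq_integral_Ioc, ← intervalIntegral.integral_of_le zero_le_one]
  · rw [intervalIntegral.integral_sub intervalIntegrable_const
      intervalIntegral.intervalIntegrable_id]
    norm_num
  · exact (continuous_const.sub continuous_id).integrableOn_Icc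
  · filter_upwards [ae_restrict_mem measurableSet_Icc] with x hx
    exact sub_nonneg.mpr hx.2

theorem convexHull_zero_single_single :
    convexHull ℝ {0, EuclideanSpace.single 0 1, EuclideanSpace.single 1 1} =
      {x : EuclideanSpace ℝ (Fin 2) | 0 ≤ x 0 ∧ 0 ≤ x 1 ∧ x 0 + x 1 ≤ 1} := by
  apply Set.Subset.antisymm
  · refine convexHull_min ?_ ?_
    · rintro x (rfl | rfl | rfl) <;> simp
    · rintro x ⟨hx0, hx1, hx⟩ y ⟨hy0, hy1, hy⟩ a b ha hb hab
      simp only [Set.mem_ofPred_eq, PiLp.add_apply, PiLp.smul_apply, smul_eq_mul]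
      refine ⟨by positivity, by positivity, by nlinarith⟩
  · rintro x ⟨hx0, hx1, hx⟩
    have hsum : ∑ i, ![1 - x 0 - x 1, x 0, x 1] i •
        ![0, EuclideanSpace.single 0 1, EuclideanSpace.single 1 1] i = x := by
      ext i
      fin_cases i <;> simp [Fin.sum_univ_three]
    rw [← hsum]
    refine (convex_convexHull ℝ _).sum_mem (fun i _ ↦ ?_) ?_ (fun i _ ↦ ?_)
    · fin_cases i <;> simp <;> linarith
    · simp only [Fin.sum_univ_three, Fin.isValue, Matrix.cons_val_zero, Matrix.cons_val_one,
        Matrix.cons_val]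
      ring
    · fin_cases i <;> exact subset_convexHull ℝ _ (by simp)

theorem volume_convexHull_zero_single_single :
    volume (convexHull ℝ {0, EuclideanSpace.single 0 1, EuclideanSpace.single 1 1} :
      Set (EuclideanSpace ℝ (Fin 2))) = ENNReal.ofReal (1 / 2) := by
  rw [convexHull_zero_single_single, ← volume_triangle_prod]
  exact ((EuclideanSpace.volume_preserving_symm_measurableEquiv_toLp (Fin 2)).trans
    (volume_preserving_finTwoArrow ℝ)).measure_preimage_equiv
    {x : ℝ × ℝ | 0 ≤ x.1 ∧ 0 ≤ x.2 ∧ x.1 + x.2 ≤ 1}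

theorem det_constr_basisFun (u v : EuclideanSpace ℝ (Fin 2)) :
    LinearMap.det ((EuclideanSpace.basisFun (Fin 2) ℝ).toBasis.constr ℝ ![u, v]) = det2 u v := by
  set e := (EuclideanSpace.basisFun (Fin 2) ℝ).toBasis
  have h := e.det_comp (e.constr ℝ ![u, v]) e
  rw [e.det_self, mul_one] at h
  rw [← h, Module.Basis.det_apply, Matrix.det_fin_two]
  simp [e, det2, Module.Basis.toMatrix_apply, mul_comm]

theorem volume_convexHull_triangle (p q r : EuclideanSpace ℝ (Fin 2)) :
    volume (convexHull ℝ {p, q, r}) = ENNReal.ofReal (|det2 (q - p) (r - p)| / 2) := by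
  set f := (EuclideanSpace.basisFun (Fin 2) ℝ).toBasis.constr ℝ ![q - p, r - p]
  have himage : ({p, q, r} : Set (EuclideanSpace ℝ (Fin 2))) =
      p +ᵥ f '' {0, EuclideanSpace.single 0 1, EuclideanSpace.single 1 1} := by
    have hf : ∀ i, f (EuclideanSpace.single i 1) = ![q - p, r - p] i := fun i ↦ by
      rw [← EuclideanSpace.basisFun_apply, ← OrthonormalBasis.coe_toBasis,
        Module.Basis.constr_basis]
    simp [Set.image_insert_eq, Set.vadd_set_insert, hf]
  rw [himage, convexHull_vadd, measure_vadd, ← LinearMap.image_convexHull,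
    Measure.addHaar_image_linearMap, volume_convexHull_zero_single_single, det_constr_basisFun,
    ← ENNReal.ofReal_mul (abs_nonneg _)]
  ring_nf

theorem cos_angle_mul_dist_mul_dist {V P : Type*} [NormedAddCommGroup V] [InnerProductSpace ℝ V]
    [MetricSpace P] [NormedAddTorsor V P] (p₁ p₂ p₃ : P) :
    Real.cos (∠ p₁ p₂ p₃) * (dist p₁ p₂ * dist p₃ p₂) = inner ℝ (p₁ -ᵥ p₂) (p₃ -ᵥ p₂) := by
  rw [dist_eq_norm_vsub V, dist_eq_norm_vsub V]
  exact InnerProductGeometry.cos_angle_mul_norm_mul_norm _ _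

theorem dist_sq_mul_dist_mul_dist_mul_cos_angle_mul_apply_unit_tangent {V : Type*}
    [NormedAddCommGroup V] [InnerProductSpace ℝ V] (B : V →ₗ[ℝ] V →ₗ[ℝ] ℝ) {p q r : V}
    (hqr : q ≠ r) :
    dist q r ^ 2 * dist p q * dist r p * Real.cos (∠ q p r) *
        B (‖r - q‖⁻¹ • (r - q)) (‖r - q‖⁻¹ • (r - q)) =
      inner ℝ (q - p) (r - p) * B (r - q) (r - q) := by
  have hnorm : ‖r - q‖ ≠ 0 := norm_ne_zero_iff.mpr (sub_ne_zero.mpr hqr.symm)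
  have hcos := cos_angle_mul_dist_mul_dist (V := V) q p r
  rw [vsub_eq_sub, vsub_eq_sub] at hcos
  rw [← hcos, dist_comm p q, dist_eq_norm_sub' q r]
  simp only [map_smul, LinearMap.smul_apply, smul_eq_mul]
  field_simp

theorem bilin_apply_eq_sum_single {ι : Type*} [Fintype ι] [DecidableEq ι]
    (B : EuclideanSpace ℝ ι →ₗ[ℝ] EuclideanSpace ℝ ι →ₗ[ℝ] ℝ) (x y : EuclideanSpace ℝ ι) :
    B x y = ∑ i, ∑ j, x i * y j * B (EuclideanSpace.single i 1) (EuclideanSpace.single j 1) := by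
  conv_lhs => rw [← (EuclideanSpace.basisFun ι ℝ).sum_repr x,
    ← (EuclideanSpace.basisFun ι ℝ).sum_repr y]
  simp only [EuclideanSpace.basisFun_repr, EuclideanSpace.basisFun_apply, map_sum, map_smul,
    LinearMap.coe_sum, LinearMap.coe_smul, Finset.sum_apply, Pi.smul_apply, smul_eq_mul,
    Finset.mul_sum, mul_left_comm (y _), mul_assoc]
  exact Finset.sum_comm

theorem trace_mul_det2_sq_eq_sum
    (B : EuclideanSpace ℝ (Fin 2) →ₗ[ℝ] EuclideanSpace ℝ (Fin 2) →ₗ[ℝ] ℝ)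
    (z : Fin 3 → EuclideanSpace ℝ (Fin 2)) :
    (B (EuclideanSpace.single 0 1) (EuclideanSpace.single 0 1) +
        B (EuclideanSpace.single 1 1) (EuclideanSpace.single 1 1)) *
        det2 (z 1 - z 0) (z 2 - z 0) ^ 2 =
      ∑ k, inner ℝ (z (k + 1) - z k) (z (k - 1) - z k) *
        B (z (k - 1) - z (k + 1)) (z (k - 1) - z (k + 1)) := by
  simp only [Fin.sum_univ_three, Fin.isValue, show (0 : Fin 3) - 1 = 2 from rfl,
    show (1 : Fin 3) + 1 = 2 from rfl, show (2 : Fin 3) + 1 = 0 from rfl,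
    show (2 : Fin 3) - 1 = 1 from rfl, show (1 : Fin 3) - 1 = 0 from rfl, zero_add]
  rw [bilin_apply_eq_sum_single B (z 2 - z 1), bilin_apply_eq_sum_single B (z 0 - z 2),
    bilin_apply_eq_sum_single B (z 1 - z 0)]
  simp only [Fin.isValue, det2, PiLp.sub_apply, EuclideanSpace.inner_eq_star_dotProduct, dotProduct,
    WithLp.ofLp_sub, Pi.star_apply, Pi.sub_apply, star_trivial, Fin.sum_univ_two]
  ring

theorem laplacian_quadratic_tangential_representation_general
    (z : Fin 3 → EuclideanSpace ℝ (Fin 2)) (hz : AffineIndependent ℝ z)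
    (ℓ θ : Fin 3 → ℝ)
    (hℓ : ∀ j, ℓ j = dist (z (j + 1)) (z (j - 1)))
    (hθ : ∀ j, θ j = ∠ (z (j + 1)) (z j) (z (j - 1)))
    (t : Fin 3 → EuclideanSpace ℝ (Fin 2))
    (ht : ∀ j, t j = ‖z (j - 1) - z (j + 1)‖⁻¹ • (z (j - 1) - z (j + 1)))
    (area : ℝ)
    (harea : area = (volume (convexHull ℝ ({z 0, z 1, z 2} :
      Set (EuclideanSpace ℝ (Fin 2))))).toReal)
    (B : EuclideanSpace ℝ (Fin 2) →ₗ[ℝ] EuclideanSpace ℝ (Fin 2) →ₗ[ℝ] ℝ) :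
    2 * B (EuclideanSpace.single 0 (1:ℝ)) (EuclideanSpace.single 0 (1:ℝ)) +
      2 * B (EuclideanSpace.single 1 (1:ℝ)) (EuclideanSpace.single 1 (1:ℝ)) =
      1 / (4 * area ^ 2) * ∑ k : Fin 3,
        (ℓ k) ^ 2 * ℓ (k - 1) * ℓ (k + 1) * Real.cos (θ k) * (2 * B (t k) (t k)) := by
  have hD := det2_sub_ne_zero_of_affineIndependent hz
  have harea_sq : 4 * area ^ 2 = det2 (z 1 - z 0) (z 2 - z 0) ^ 2 := by
    rw [harea, volume_convexHull_triangle, ENNReal.toReal_ofReal (by positivity), div_pow, sq_abs]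
    ring
  have hterm : ∀ k, ℓ k ^ 2 * ℓ (k - 1) * ℓ (k + 1) * Real.cos (θ k) * (2 * B (t k) (t k)) =
      2 * (inner ℝ (z (k + 1) - z k) (z (k - 1) - z k) *
        B (z (k - 1) - z (k + 1)) (z (k - 1) - z (k + 1))) := by
    intro k
    have hne : z (k + 1) ≠ z (k - 1) := hz.injective.ne (by fin_cases k <;> decide)
    have hsucc : k + 1 + 1 = k - 1 := by fin_cases k <;> rfl
    have hpred : k - 1 - 1 = k + 1 := by fin_cases k <;> rfl
    simp only [hℓ, hθ, ht, sub_add_cancel, add_sub_cancel_right, hsucc, hpred]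
    rw [← dist_sq_mul_dist_mul_dist_mul_cos_angle_mul_apply_unit_tangent B hne]
    ring
  rw [Finset.sum_congr rfl fun k _ ↦ hterm k, ← Finset.mul_sum, ← trace_mul_det2_sq_eq_sum,
    harea_sq]
  field_simp

/-- Laplacian of a quadratic polynomial in terms of second tangential derivatives:
`Δw = (1/(4|T|²)) ∑_k ℓ_k² ℓ_{k−1} ℓ_{k+1} cos θ_k ∂_{t_k}² w`, where for
`w x = c + b x + B x x` one has `Δw = 2 B e₀ e₀ + 2 B e₁ e₁` and `∂_{t_k}² w = 2 B t_k t_k`. -/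
theorem laplacian_quadratic_tangential_representation
    (z : Fin 3 → EuclideanSpace ℝ (Fin 2)) (hz : AffineIndependent ℝ z)
    (ℓ θ : Fin 3 → ℝ)
    (hℓ : ∀ j, ℓ j = dist (z (j + 1)) (z (j - 1)))
    (hθ : ∀ j, θ j = ∠ (z (j + 1)) (z j) (z (j - 1)))
    (t : Fin 3 → EuclideanSpace ℝ (Fin 2))
    (ht : ∀ j, t j = ‖z (j - 1) - z (j + 1)‖⁻¹ • (z (j - 1) - z (j + 1)))
    (area : ℝ)
    (harea : area = (volume (convexHull ℝ ({z 0, z 1, z 2} :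
      Set (EuclideanSpace ℝ (Fin 2))))).toReal)
    (c : ℝ) (b : EuclideanSpace ℝ (Fin 2) →ₗ[ℝ] ℝ)
    (B : EuclideanSpace ℝ (Fin 2) →ₗ[ℝ] EuclideanSpace ℝ (Fin 2) →ₗ[ℝ] ℝ)
    (w : EuclideanSpace ℝ (Fin 2) → ℝ) (hw : ∀ x, w x = c + b x + B x x) :
    2 * B (EuclideanSpace.single 0 (1:ℝ)) (EuclideanSpace.single 0 (1:ℝ)) +
      2 * B (EuclideanSpace.single 1 (1:ℝ)) (EuclideanSpace.single 1 (1:ℝ)) =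
      1 / (4 * area ^ 2) * ∑ k : Fin 3,
        (ℓ k) ^ 2 * ℓ (k - 1) * ℓ (k + 1) * Real.cos (θ k) * (2 * B (t k) (t k)) :=
  laplacian_quadratic_tangential_representation_general z hz ℓ θ hℓ hθ t ht area harea B
end
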